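/- Let ψ : {1,…,n} → ℂ and let P be the homogeneous operator of degree 0 associated to ψ, i.e. P(e_i) = ψ(i)·e_i for all i. Suppose P is a Rota–Baxter operator of weight 0, i.e. P(x)·P(y) = P(x·P(y) + P(x)·y) for all x, y ∈ A, and suppose ψ(t) = 0 for all 1 ≤ t ≤ ⌊n/2⌋. Then ψ is nonzero at most at one index: for all r, s with ⌊n/2⌋ < r < s ≤ n, either ψ(r) = 0 or ψ(s) = 0. -/
import Mathlib


open Finset

/-- Coordinate space of the `n`-dimensional complex null-filiform associative algebra,
with respect to the basis `e_1, …, e_n` (coordinate `m : Fin n` corresponds to `e_{m+1}`). -/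
abbrev NF (n : ℕ) : Type := Fin n → ℂ

/-- Multiplication of the null-filiform algebra: `e_i · e_j = e_{i+j}` if `i + j ≤ n`
and `e_i · e_j = 0` if `i + j > n`, extended bilinearly. -/
noncomputable def nfMul {n : ℕ} (x y : NF n) : NF n :=
  fun m => ∑ i : Fin n, ∑ j : Fin n,
    if (i : ℕ) + (j : ℕ) + 1 = (m : ℕ) then x i * y j else 0

/-- The basis element `e_k`, for `1 ≤ k ≤ n` (it is `0` if `k = 0` or `k > n`). -/
noncomputable def nfE (n k : ℕ) : NF n := fun m => if (m : ℕ) + 1 = k then 1 else 0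

/-- The `k`-th power (for `k ≥ 1`) of an element of the null-filiform algebra. -/
noncomputable def nfPow {n : ℕ} (x : NF n) : ℕ → NF n
  | 0 => 0
  | 1 => x
  | k + 2 => nfMul (nfPow x (k + 1)) x

lemma nfMul_zero_left {n : ℕ} (y : NF n) : nfMul (0 : NF n) y = 0 := by
  funext m; simp [nfMul]

lemma nfMul_smul_right {n : ℕ} (c : ℂ) (x y : NF n) :
    nfMul x (c • y) = c • nfMul x y := by
  funext m
  simp only [nfMul, Pi.smul_apply, smul_eq_mul, Finset.mul_sum]
  refine Finset.sum_congr rfl fun i _ => Finset.sum_congr rfl fun j _ => ?_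
  split <;> ring

lemma nfMul_E {n : ℕ} (a b : ℕ) (ha1 : 1 ≤ a) (han : a ≤ n) (hb1 : 1 ≤ b) (hbn : b ≤ n) :
    nfMul (nfE n a) (nfE n b) = nfE n (a + b) := by
  funext m
  have hia : a - 1 < n := by omega
  have hib : b - 1 < n := by omega
  simp only [nfMul, nfE]
  rw [Finset.sum_eq_single (⟨a - 1, hia⟩ : Fin n)]
  · rw [Finset.sum_eq_single (⟨b - 1, hib⟩ : Fin n)]
    · simp only
      have h1 : (a - 1 : ℕ) + 1 = a := by omega
      have h2 : (b - 1 : ℕ) + 1 = b := by omega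
      have heq : ((a - 1 : ℕ) + (b - 1) + 1 = (m : ℕ)) ↔ ((m : ℕ) + 1 = a + b) := by
        omega
      simp only [h1, h2, heq, if_true, mul_one]
    · intro j _ hj
      have : ¬ ((j : ℕ) + 1 = b) := by
        intro h; apply hj; ext; simp; omega
      simp [this]
    · intro h; exact absurd (Finset.mem_univ _) h
  · intro i _ hi
    have : ¬ ((i : ℕ) + 1 = a) := by
      intro h; apply hi; ext; simp; omega
    simp [this]
  · intro h; exact absurd (Finset.mem_univ _) h

/-- Rota–Baxter operator of weight `0`, homogeneous of degree `0`, case (b):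
if `ψ` vanishes on `{1, …, ⌊n/2⌋}`, then `ψ` is nonzero at most at one index. -/
theorem rota_baxter_weight0_degree0_case_b (n : ℕ) (hn : 1 ≤ n) (ψ : ℕ → ℂ)
    (P : NF n →ₗ[ℂ] NF n)
    (hP : ∀ i, 1 ≤ i → i ≤ n → P (nfE n i) = ψ i • nfE n i)
    (hRB : ∀ x y : NF n,
      nfMul (P x) (P y) = P (nfMul x (P y) + nfMul (P x) y))
    (hψ : ∀ t, 1 ≤ t → t ≤ n / 2 → ψ t = 0) :
    ∀ r s, n / 2 < r → r < s → s ≤ n → ψ r = 0 ∨ ψ s = 0 := by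
  intro r s hr hrs hsn
  set i := s - r with hi
  have hi1 : 1 ≤ i := by omega
  have hi2 : i ≤ n / 2 := by omega
  have hPi : P (nfE n i) = 0 := by
    rw [hP i hi1 (by omega), hψ i hi1 hi2, zero_smul]
  have hkey := hRB (nfE n i) (nfE n r)
  rw [hPi, nfMul_zero_left, hP r (by omega) (by omega), nfMul_smul_right,
    nfMul_zero_left, nfMul_E i r hi1 (by omega) (by omega) (by omega),
    add_zero, map_smul, show i + r = s by omega, hP s (by omega) hsn] at hkey
  have hc : (ψ r * ψ s) • nfE n s = 0 := by
    rw [mul_smul]; exact hkey.symm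
  have hne : nfE n s ≠ 0 := by
    intro h
    have := congrFun h ⟨s - 1, by omega⟩
    simp [nfE] at this
    exact this (by omega)
  rcases smul_eq_zero.mp hc with h | h
  · exact mul_eq_zero.mp h
  · exact absurd h hne
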